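/- Let p be a point sphere complex and γ ⊂ ℝ^{4,2} a circle, i.e. a 3-dimensional subspace orthogonal to p on which the induced form has signature (2,1). Let m, n ∈ γ be linearly independent isotropic vectors (two distinct points of the circle). Then ⟨m,n⟩ ≠ 0, and there exists a nonzero isotropic vector s ∈ ℝ^{4,2} with ⟨s,m⟩ = ⟨s,n⟩ = 0 and s + ⟨s,p⟩p ∈ γ — i.e. an oriented sphere containing both points m and n that intersects the circle orthogonally. Hence any two contact elements that intersect a circle orthogonally at different points share, up to orientation, a common sphere. -/

import Mathlib

/-!
A circle is an isometric copy of ℝ^{2,1}, so write `m = f a`, `n = f b` with `a, b` null in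
ℝ^{2,1}. The Lorentzian cross product `c = a × b` is orthogonal to `a` and `b` and satisfies
`⟨c,c⟩ = ⟨a,b⟩² - ⟨a,a⟩⟨b,b⟩ = ⟨a,b⟩²`. If `⟨a,b⟩ = 0`, a sum-of-squares identity forces every
2×2 minor of `(a, b)` to vanish, contradicting independence. Otherwise
`s = f c + ⟨m,n⟩ p` is isotropic (as `⟨p,p⟩ = -1`), orthogonal to `m` and `n`, and
`s + ⟨s,p⟩ p = f c ∈ γ`.
-/

noncomputable section

/-- The symmetric bilinear form of signature (4,2) on ℝ⁶, modelling ℝ^{4,2}. -/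
def B (x y : Fin 6 → ℝ) : ℝ :=
  x 0 * y 0 + x 1 * y 1 + x 2 * y 2 + x 3 * y 3 - x 4 * y 4 - x 5 * y 5

/-- The induced form on the subspace `W` has signature (2,1) (it admits a
spanning pseudo-orthonormal triple of Gram matrix diag(1,1,-1)); in particular
`W` is 3-dimensional. -/
def SigTwoOne (W : Submodule ℝ (Fin 6 → ℝ)) : Prop :=
  ∃ u v w : Fin 6 → ℝ, Submodule.span ℝ ({u, v, w} : Set (Fin 6 → ℝ)) = W ∧
    B u u = 1 ∧ B v v = 1 ∧ B w w = -1 ∧ B u v = 0 ∧ B u w = 0 ∧ B v w = 0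

def lorentz (a b : Fin 3 → ℝ) : ℝ := a 0 * b 0 + a 1 * b 1 - a 2 * b 2

/-- The Euclidean cross product with its last coordinate negated, so that it is
`lorentz`-orthogonal to both factors. -/
def lorentzCross (a b : Fin 3 → ℝ) : Fin 3 → ℝ :=
  ![a 1 * b 2 - a 2 * b 1, a 2 * b 0 - a 0 * b 2, a 1 * b 0 - a 0 * b 1]

lemma lorentz_lorentzCross_left (a b : Fin 3 → ℝ) : lorentz (lorentzCross a b) a = 0 := by
  simp only [lorentz, lorentzCross, Matrix.cons_val_zero, Matrix.cons_val_one, Matrix.cons_val]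
  ring

lemma lorentz_lorentzCross_right (a b : Fin 3 → ℝ) : lorentz (lorentzCross a b) b = 0 := by
  simp only [lorentz, lorentzCross, Matrix.cons_val_zero, Matrix.cons_val_one, Matrix.cons_val]
  ring

lemma lorentz_lorentzCross_self (a b : Fin 3 → ℝ) :
    lorentz (lorentzCross a b) (lorentzCross a b) = lorentz a b ^ 2 - lorentz a a * lorentz b b := by
  simp only [lorentz, lorentzCross, Matrix.cons_val_zero, Matrix.cons_val_one, Matrix.cons_val]
  ring

lemma lorentzCross_eq_zero_of_isotropic {a b : Fin 3 → ℝ} (ha : lorentz a a = 0) (hb : lorentz b b = 0)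
    (hab : lorentz a b = 0) : lorentzCross a b = 0 := by
  have hsq : ∑ i, lorentzCross a b i ^ 2 = 0 := by
    simp only [lorentz] at ha hb hab
    simp only [lorentzCross, Fin.sum_univ_three, Matrix.cons_val_zero, Matrix.cons_val_one,
      Matrix.cons_val]
    -- `∑ minors² = ⟨a,b⟩² - ⟨a,a⟩⟨b,b⟩ + 2 (a 0 * b 1 - a 1 * b 0)²`, and for null `a, b`
    -- the last square is also a combination of the hypotheses
    linear_combination (b 0 ^ 2 + b 1 ^ 2 + b 2 ^ 2) * ha + 2 * a 2 ^ 2 * hb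
      - (a 0 * b 0 + a 1 * b 1 + 3 * a 2 * b 2) * hab
  funext i
  exact pow_eq_zero_iff two_ne_zero |>.1 <|
    (Finset.sum_eq_zero_iff_of_nonneg fun j _ => sq_nonneg _).1 hsq i (Finset.mem_univ i)

lemma LinearIndependent.lorentzCross_ne_zero {a b : Fin 3 → ℝ}
    (hab : LinearIndependent ℝ ![a, b]) : lorentzCross a b ≠ 0 := by
  intro h
  have hminor (i j : Fin 3) : b i * a j - a i * b j = 0 := by
    have h0 : a 1 * b 2 - a 2 * b 1 = 0 := congrFun h 0
    have h1 : a 2 * b 0 - a 0 * b 2 = 0 := congrFun h 1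
    have h2 : a 1 * b 0 - a 0 * b 1 = 0 := congrFun h 2
    fin_cases i <;> fin_cases j <;> dsimp <;> linarith
  have ha : a = 0 := funext fun i =>
    neg_eq_zero.1 (LinearIndependent.pair_iff.1 hab (b i) (-a i) (funext fun j => by
      simpa [neg_mul, ← sub_eq_add_neg] using hminor i j)).2
  exact hab.ne_zero 0 ha

lemma lorentz_ne_zero_of_linearIndependent {a b : Fin 3 → ℝ} (ha : lorentz a a = 0)
    (hb : lorentz b b = 0) (hab : LinearIndependent ℝ ![a, b]) : lorentz a b ≠ 0 :=
  fun h => hab.lorentzCross_ne_zero (lorentzCross_eq_zero_of_isotropic ha hb h)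


lemma B_comm (x y : Fin 6 → ℝ) : B x y = B y x := by
  unfold B; ring

lemma B_add_left (x y z : Fin 6 → ℝ) : B (x + y) z = B x z + B y z := by
  simp only [B, Pi.add_apply]; ring

lemma B_add_right (x y z : Fin 6 → ℝ) : B x (y + z) = B x y + B x z := by
  rw [B_comm, B_add_left, B_comm y, B_comm z]

lemma B_smul_left (c : ℝ) (x y : Fin 6 → ℝ) : B (c • x) y = c * B x y := by
  simp only [B, Pi.smul_apply, smul_eq_mul]; ring

lemma B_smul_right (c : ℝ) (x y : Fin 6 → ℝ) : B x (c • y) = c * B x y := by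
  rw [B_comm, B_smul_left, B_comm]

lemma SigTwoOne.exists_lorentz_isometry {W : Submodule ℝ (Fin 6 → ℝ)} (hW : SigTwoOne W) :
    ∃ f : (Fin 3 → ℝ) →ₗ[ℝ] (Fin 6 → ℝ),
      LinearMap.range f = W ∧ ∀ a b, B (f a) (f b) = lorentz a b := by
  obtain ⟨u, v, w, hspan, huu, hvv, hww, huv, huw, hvw⟩ := hW
  refine ⟨Fintype.linearCombination ℝ ![u, v, w], ?_, fun a b => ?_⟩
  · rw [Fintype.range_linearCombination, ← hspan]
    simp only [Matrix.range_cons, Matrix.range_empty, Set.union_empty, Set.singleton_union]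
  · simp only [Fintype.linearCombination_apply, Fin.sum_univ_three, Matrix.cons_val_zero,
      Matrix.cons_val_one, Matrix.cons_val_two, Matrix.head_cons, Matrix.tail_cons,
      B_add_left, B_add_right, B_smul_left, B_smul_right, huu, hvv, hww, huv, huw, hvw,
      B_comm v u, B_comm w u, B_comm w v, lorentz]
    ring

lemma B_add_smul_self {p g : Fin 6 → ℝ} (hp : B p p = -1) (hgp : B g p = 0) (c : ℝ) :
    B (g + c • p) (g + c • p) = B g g - c ^ 2 := by
  simp only [B_add_left, B_add_right, B_smul_left, B_smul_right, hp, hgp, B_comm p g]; ring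

lemma B_add_smul_left {p g x : Fin 6 → ℝ} (hxp : B x p = 0) (c : ℝ) :
    B (g + c • p) x = B g x := by
  rw [B_add_left, B_smul_left, B_comm p, hxp, mul_zero, add_zero]

theorem stmt_15_general (p : Fin 6 → ℝ) (hp : B p p = -1)
    (γ : Submodule ℝ (Fin 6 → ℝ)) (hγp : ∀ x ∈ γ, B x p = 0)
    (hγsig : SigTwoOne γ)
    (m n : Fin 6 → ℝ) (hmγ : m ∈ γ) (hnγ : n ∈ γ)
    (im : B m m = 0) (in0 : B n n = 0)
    (hind : LinearIndependent ℝ ![m, n]) :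
    B m n ≠ 0 ∧
    ∃ s : Fin 6 → ℝ, s ≠ 0 ∧ B s s = 0 ∧ B s m = 0 ∧ B s n = 0 ∧
      s + B s p • p ∈ γ := by
  obtain ⟨f, rfl, hf⟩ := hγsig.exists_lorentz_isometry
  obtain ⟨a, rfl⟩ := hmγ
  obtain ⟨b, rfl⟩ := hnγ
  rw [hf] at im in0 ⊢
  have hab : LinearIndependent ℝ ![a, b] :=
    .of_comp f (by convert hind using 1; ext i; fin_cases i <;> rfl)
  have hμ := lorentz_ne_zero_of_linearIndependent im in0 hab
  set g := f (lorentzCross a b) with hg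
  have hgγ : g ∈ LinearMap.range f := ⟨_, rfl⟩
  have hgp : B g p = 0 := hγp g hgγ
  have hsp : B (g + lorentz a b • p) p = -lorentz a b := by
    rw [B_add_left, B_smul_left, hgp, hp]; ring
  refine ⟨hμ, g + lorentz a b • p, ?_, ?_, ?_, ?_, ?_⟩
  · intro hs
    rw [hs] at hsp
    exact hμ (by simpa [B] using hsp)
  · rw [B_add_smul_self hp hgp, hg, hf, lorentz_lorentzCross_self, im, in0]; ring
  · rw [B_add_smul_left (hγp _ ⟨a, rfl⟩), hg, hf, lorentz_lorentzCross_left]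
  · rw [B_add_smul_left (hγp _ ⟨b, rfl⟩), hg, hf, lorentz_lorentzCross_right]
  · rwa [hsp, neg_smul, add_neg_cancel_right]

/-- For two distinct points `m, n` of a circle `γ` one has
`⟨m,n⟩ ≠ 0`, and there is an oriented sphere `s` containing both points that
intersects the circle orthogonally (`s + ⟨s,p⟩p ∈ γ`); hence any two contact
elements intersecting a circle orthogonally at different points share, up to
orientation, a common sphere. -/
theorem stmt_15 (p : Fin 6 → ℝ) (hp : B p p = -1)
    (γ : Submodule ℝ (Fin 6 → ℝ)) (hγp : ∀ x ∈ γ, B x p = 0)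
    (hγdim : Module.finrank ℝ γ = 3) (hγsig : SigTwoOne γ)
    (m n : Fin 6 → ℝ) (hmγ : m ∈ γ) (hnγ : n ∈ γ)
    (hm : m ≠ 0) (im : B m m = 0) (hn : n ≠ 0) (in0 : B n n = 0)
    (hind : LinearIndependent ℝ ![m, n]) :
    B m n ≠ 0 ∧
    ∃ s : Fin 6 → ℝ, s ≠ 0 ∧ B s s = 0 ∧ B s m = 0 ∧ B s n = 0 ∧
      s + B s p • p ∈ γ :=
  stmt_15_general p hp γ hγp hγsig m n hmγ hnγ im in0 hind
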